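/- The generating function Σ_{n≥0} C'(Γ_n, x) y^n equals (1 + xy(1+y)) / (1 - x y²(1+y)), where C'(Γ_n, x) = Σ_p binomial(p+1, n-2p+1) x^p. -/

import Mathlib

/-- The hypercube graph `Q_n` on binary strings of length `n`:
two strings are adjacent iff they differ in exactly one coordinate. -/
def Qgraph (n : ℕ) : SimpleGraph (Fin n → Bool) where
  Adj x y := hammingDist x y = 1
  symm := ⟨fun x y h => (hammingDist_comm y x).trans h⟩
  loopless := ⟨fun x h => absurd ((hammingDist_self x).symm.trans h) (by omega)⟩

/-- The weight of a binary string: its number of `1`s. -/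
def wt {n : ℕ} (x : Fin n → Bool) : ℕ :=
  (Finset.univ.filter fun i => x i = true).card

/-- Fibonacci strings of length `n`: no two (cyclically non-wrapping) consecutive 1's. -/
def fibSet (n : ℕ) : Set (Fin n → Bool) :=
  {s | ∀ i j : Fin n, (j : ℕ) = (i : ℕ) + 1 → ¬(s i = true ∧ s j = true)}

/-- Lucas strings of length `n`: Fibonacci strings whose first and last bits are not both 1. -/
def lucasSet (n : ℕ) : Set (Fin n → Bool) :=
  {s | s ∈ fibSet n ∧
    ∀ i j : Fin n, (i : ℕ) = 0 → (j : ℕ) = n - 1 → ¬(s i = true ∧ s j = true)}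

/-- The binary string `0^{l_0} 1 0^{l_1} 1 ⋯ 1 0^{l_p}` determined by a list
of lengths of blocks of `0`'s. -/
def blockString (l : List ℕ) : List Bool :=
  List.intercalate [true] (l.map fun k => List.replicate k false)

/-- The vertex of `Q_n` corresponding to the string `0^{l_0} 1 0^{l_1} 1 ⋯ 1 0^{l_p}`. -/
def ofBlocks (n : ℕ) (l : List ℕ) : Fin n → Bool :=
  fun i => (blockString l).getD (i : ℕ) false

/-- `V` induces a maximal hypercube of dimension `p` inside the subgraph of `Q_n`
induced by the vertex set `S`. -/
def IsMaxCube (n p : ℕ) (S : Set (Fin n → Bool)) (V : Set (Fin n → Bool)) : Prop :=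
  V ⊆ S ∧ Nonempty ((Qgraph n).induce V ≃g Qgraph p) ∧
    ¬ ∃ V' : Set (Fin n → Bool), V ⊂ V' ∧ V' ⊆ S ∧
      Nonempty ((Qgraph n).induce V' ≃g Qgraph (p + 1))

/-- Binomial coefficient `a` choose `b` with an integer lower argument,
equal to `0` when `b < 0`. -/
def chooseZ (a : ℕ) (b : ℤ) : ℕ := if 0 ≤ b then a.choose b.toNat else 0


open Polynomial in
/-- The counting polynomial of maximal hypercubes in the Fibonacci cube `Γ_n`:
the coefficient of `x^p` is `(p+1).choose (n - 2p + 1)`. -/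
noncomputable def fibCubePoly (n : ℕ) : Polynomial ℤ :=
  ∑ p ∈ Finset.range (n + 1), C ((chooseZ (p + 1) ((n : ℤ) - 2 * p + 1) : ℤ)) * X ^ p


lemma chooseZ_succ (p : ℕ) (k : ℤ) :
    chooseZ (p + 1) k = chooseZ p (k - 1) + chooseZ p k := by
  unfold chooseZ
  rcases lt_trichotomy k 0 with h | h | h
  · rw [if_neg (by omega), if_neg (by omega), if_neg (by omega)]
  · subst h; simp
  · rw [if_pos (by omega), if_pos (by omega), if_pos (by omega)]
    obtain ⟨m, rfl⟩ : ∃ m : ℕ, k = (m : ℤ) + 1 := ⟨(k - 1).toNat, by omega⟩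
    have h1 : ((m : ℤ) + 1).toNat = m + 1 := by omega
    have h2 : ((m : ℤ) + 1 - 1).toNat = m := by omega
    rw [h1, h2, Nat.choose_succ_succ]

lemma chooseZ_eq_zero (p : ℕ) (k : ℤ) (h : k < 0) : chooseZ p k = 0 := by
  unfold chooseZ; rw [if_neg (by omega)]

open Polynomial in
lemma coeff_fibCubePoly (n p : ℕ) :
    (fibCubePoly n).coeff p = (chooseZ (p + 1) ((n : ℤ) - 2 * p + 1) : ℤ) := by
  unfold fibCubePoly
  rw [Polynomial.finset_sum_coeff]
  simp only [Polynomial.coeff_C_mul, Polynomial.coeff_X_pow, mul_ite, mul_one, mul_zero]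
  rw [Finset.sum_ite_eq (Finset.range (n+1)) p]
  by_cases hp : p ∈ Finset.range (n + 1)
  · rw [if_pos hp]
  · rw [if_neg hp]
    rw [Finset.mem_range] at hp
    rw [chooseZ_eq_zero _ _ (by omega)]
    simp

open Polynomial in
lemma fibCubePoly_rec (n : ℕ) :
    fibCubePoly (n + 3) = X * fibCubePoly (n + 1) + X * fibCubePoly n := by
  ext p
  cases p with
  | zero =>
    simp only [Polynomial.coeff_add, Polynomial.mul_coeff_zero, Polynomial.coeff_X_zero,
      zero_mul, add_zero, coeff_fibCubePoly]
    rw [chooseZ]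
    rw [if_pos (by push_cast; omega)]
    rw [Nat.choose_eq_zero_of_lt (by omega)]
    simp
  | succ q =>
    simp only [Polynomial.coeff_add, Polynomial.coeff_X_mul, coeff_fibCubePoly]
    have e1 : ((n + 3 : ℕ) : ℤ) - 2 * ((q + 1 : ℕ) : ℤ) + 1 = (n : ℤ) - 2 * q + 2 := by
      push_cast; ring
    have e2 : ((n + 1 : ℕ) : ℤ) - 2 * (q : ℤ) + 1 = (n : ℤ) - 2 * q + 2 := by
      push_cast; ring
    rw [e1, e2, chooseZ_succ (q + 1) ((n : ℤ) - 2 * q + 2)]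
    have e3 : (n : ℤ) - 2 * q + 2 - 1 = (n : ℤ) - 2 * q + 1 := by ring
    rw [e3]
    push_cast; ring

open Polynomial in
lemma fibCubePoly_zero : fibCubePoly 0 = 1 := by
  norm_num [fibCubePoly, Finset.sum_range_succ, chooseZ,
    show Int.toNat 1 = 1 from rfl]

open Polynomial in
lemma fibCubePoly_one : fibCubePoly 1 = X := by
  norm_num [fibCubePoly, Finset.sum_range_succ, chooseZ,
    show Int.toNat 2 = 2 from rfl, show Nat.choose 1 2 = 0 from rfl,
    show Int.toNat 0 = 0 from rfl]

open Polynomial in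
lemma fibCubePoly_two : fibCubePoly 2 = 2 * X := by
  norm_num [fibCubePoly, Finset.sum_range_succ, chooseZ,
    show Int.toNat 3 = 3 from rfl, show Int.toNat 1 = 1 from rfl,
    show Nat.choose 1 3 = 0 from rfl]

open Polynomial PowerSeries in
/-- The generating function `∑ C'(Γ_n, x) yⁿ = (1 + xy(1+y)) / (1 - x y² (1+y))`,
as an identity of formal power series in `y` over `ℤ[x]`. -/
theorem fibCubePoly_generating_function :
    (1 - (PowerSeries.C (R := Polynomial ℤ)) X * PowerSeries.X ^ 2 * (1 + PowerSeries.X)) *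
        PowerSeries.mk (fun n => fibCubePoly n) =
      1 + (PowerSeries.C (R := Polynomial ℤ)) X * PowerSeries.X * (1 + PowerSeries.X) := by
  set g : PowerSeries (Polynomial ℤ) := PowerSeries.mk (fun n => fibCubePoly n) with hg
  have key : g - PowerSeries.C (R := Polynomial ℤ) X * (g * PowerSeries.X ^ 2)
      - PowerSeries.C (R := Polynomial ℤ) X * (g * PowerSeries.X ^ 3)
      = 1 + PowerSeries.C (R := Polynomial ℤ) X * PowerSeries.X ^ 1
        + PowerSeries.C (R := Polynomial ℤ) X * PowerSeries.X ^ 2 := by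
    ext n : 1
    simp only [map_sub, map_add, PowerSeries.coeff_C_mul, PowerSeries.coeff_mul_X_pow',
      hg, PowerSeries.coeff_mk, PowerSeries.coeff_one, PowerSeries.coeff_C]
    match n with
    | 0 =>
      norm_num [fibCubePoly_zero]
    | 1 =>
      norm_num [fibCubePoly_one]
    | 2 =>
      norm_num [fibCubePoly_zero, fibCubePoly_two]
      ring
    | (m + 3) =>
      have h2 : 2 ≤ m + 3 := by omega
      have h3 : 3 ≤ m + 3 := by omega
      rw [if_pos h2, if_pos h3, if_neg (show ¬ (m + 3 = 0) by omega),
        if_pos (show 1 ≤ m + 3 by omega), if_neg (show ¬ (m + 3 - 1 = 0) by omega),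
        if_neg (show ¬ (m + 3 - 2 = 0) by omega)]
      rw [show m + 3 - 2 = m + 1 from rfl, show m + 3 - 3 = m from rfl, fibCubePoly_rec m]
      split_ifs <;> ring
  calc (1 - (PowerSeries.C (R := Polynomial ℤ)) X * PowerSeries.X ^ 2 * (1 + PowerSeries.X)) * g
      = g - PowerSeries.C (R := Polynomial ℤ) X * (g * PowerSeries.X ^ 2)
        - PowerSeries.C (R := Polynomial ℤ) X * (g * PowerSeries.X ^ 3) := by ring
    _ = 1 + PowerSeries.C (R := Polynomial ℤ) X * PowerSeries.X ^ 1
        + PowerSeries.C (R := Polynomial ℤ) X * PowerSeries.X ^ 2 := key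
    _ = 1 + (PowerSeries.C (R := Polynomial ℤ)) X * PowerSeries.X * (1 + PowerSeries.X) := by ring
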